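/- Under the hypotheses of the previous gauge-transformation setup (M Hilbert-Schmidt, M₀₀ = 1, off-(0,0) Hilbert-Schmidt norm at most ε ≤ 1/4), the (0,0) entry of M̃ = exp(−B) M exp(B) satisfies |M̃₀₀ − 1| ≤ C ε² for an absolute constant C. -/

import Mathlib

/-!
With `u = exp(-B)† e₀ = exp(-B†) e₀` and `v = exp B e₀` we have `M̃₀₀ = ⟪u, M v⟫`. Since
`B e₀ = l` and `-B† e₀ = r`, the exponential series gives `u = e₀ + r + O(ε²)` and
`v = e₀ + l + O(ε²)`, while `M e₀ = e₀ + l` and `M† e₀ = e₀ + r`. Expanding `⟪u, M v⟫`, the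
constant term is `M₀₀ = 1` and the first-order terms `⟪r, e₀⟫`, `⟪e₀, l⟫` vanish because
`l, r ⟂ e₀`; everything else is `O(ε²)`, using that the operator norm of `M` is bounded by its
Hilbert–Schmidt norm.
-/

open NormedSpace

/-- `V = ℓ²(ℕ, ℝ)`. -/
noncomputable abbrev V : Type := lp (fun _ : ℕ => ℝ) 2

noncomputable def e (i : ℕ) : V := lp.single 2 i (1 : ℝ)

open scoped InnerProductSpace InnerProduct

theorem norm_exp_sub_one_sub_le {𝔸 : Type*} [NormedRing 𝔸] [NormedAlgebra ℝ 𝔸]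
    [CompleteSpace 𝔸] (a : 𝔸) : ‖exp a - 1 - a‖ ≤ Real.exp ‖a‖ - 1 - ‖a‖ := by
  set f : ℕ → 𝔸 := fun n => (n.factorial : ℝ)⁻¹ • a ^ n
  set g : ℕ → ℝ := fun n => ‖a‖ ^ n / n.factorial
  have hf : exp a - 1 - a = ∑' n, f (n + 2) := by
    rw [congrFun (exp_eq_tsum ℝ) a,
      ← (expSeries_summable' (𝕂 := ℝ) a).sum_add_tsum_nat_add 2]
    simp only [Finset.sum_range_succ, Finset.sum_range_zero, f, Nat.factorial_zero,
      Nat.factorial_one, Nat.cast_one, inv_one, pow_zero, pow_one, one_smul, zero_add]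
    abel
  have hg : Real.exp ‖a‖ - 1 - ‖a‖ = ∑' n, g (n + 2) := by
    rw [Real.exp_eq_exp_ℝ, congrFun exp_eq_tsum_div,
      ← (Real.summable_pow_div_factorial ‖a‖).sum_add_tsum_nat_add 2]
    simp only [Finset.sum_range_succ, Finset.sum_range_zero, g, Nat.factorial_zero,
      Nat.factorial_one, Nat.cast_one, pow_zero, pow_one, div_one, zero_add]
    ring
  rw [hf, hg]
  refine tsum_of_norm_bounded ((summable_nat_add_iff 2).2
    (Real.summable_pow_div_factorial ‖a‖)).hasSum fun n => ?_
  rw [norm_smul, norm_inv, Real.norm_natCast, inv_mul_eq_div]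
  exact div_le_div_of_nonneg_right (norm_pow_le' a (by omega)) (by positivity)

theorem norm_exp_sub_one_sub_le_sq {𝔸 : Type*} [NormedRing 𝔸] [NormedAlgebra ℝ 𝔸]
    [CompleteSpace 𝔸] {a : 𝔸} (ha : ‖a‖ ≤ 1) : ‖exp a - 1 - a‖ ≤ ‖a‖ ^ 2 :=
  (norm_exp_sub_one_sub_le a).trans <| (le_abs_self _).trans <|
    Real.abs_exp_sub_one_sub_id_le (by rwa [abs_norm])

namespace HilbertBasis

variable {ι E : Type*} [NormedAddCommGroup E] [InnerProductSpace ℝ E]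

theorem hasSum_inner_sq (b : HilbertBasis ι ℝ E) (x : E) :
    HasSum (fun i => ⟪b i, x⟫_ℝ ^ 2) (‖x‖ ^ 2) := by
  simpa [sq, real_inner_comm x, real_inner_self_eq_norm_sq] using b.hasSum_inner_mul_inner x x

theorem opNorm_le_sqrt_tsum_inner_sq [CompleteSpace E] (b : HilbertBasis ι ℝ E)
    (T : E →L[ℝ] E) (hT : Summable fun p : ι × ι => ⟪b p.1, T (b p.2)⟫_ℝ ^ 2) :
    ‖T‖ ≤ √(∑' p : ι × ι, ⟪b p.1, T (b p.2)⟫_ℝ ^ 2) := by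
  set row : ι → E := fun i => (T†) (b i)
  have hrow : ∀ i, ‖row i‖ ^ 2 = ∑' j, ⟪b i, T (b j)⟫_ℝ ^ 2 := fun i => by
    simp only [← (b.hasSum_inner_sq (row i)).tsum_eq, row,
      ContinuousLinearMap.adjoint_inner_right, real_inner_comm (b i)]
  have hrows :
      HasSum (fun i => ‖row i‖ ^ 2) (∑' p : ι × ι, ⟪b p.1, T (b p.2)⟫_ℝ ^ 2) := by
    simp only [hrow, hT.tsum_prod]
    exact hT.prod.hasSum
  refine T.opNorm_le_bound (Real.sqrt_nonneg _) fun w => ?_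
  rw [← Real.sqrt_sq (norm_nonneg w), ← Real.sqrt_mul' _ (sq_nonneg _),
    Real.le_sqrt (norm_nonneg _) (by positivity)]
  refine hasSum_le (fun i => ?_) (b.hasSum_inner_sq (T w)) (hrows.mul_right _)
  rw [← ContinuousLinearMap.adjoint_inner_left, ← mul_pow, ← sq_abs]
  exact pow_le_pow_left₀ (abs_nonneg _) (abs_real_inner_le_norm _ _) 2

theorem norm_le_sqrt_tsum_of_inner_sq_eq (b : HilbertBasis ι ℝ E) {α : Type*} {f : α → ℝ}
    (hf : Summable f) (hf0 : ∀ a, 0 ≤ f a) {j : ι → α} (hj : Function.Injective j) {x : E}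
    (hx : ∀ i, ⟪b i, x⟫_ℝ ^ 2 = f (j i)) : ‖x‖ ≤ √(∑' a, f a) := by
  rw [Real.le_sqrt (norm_nonneg _) (tsum_nonneg hf0), ← (b.hasSum_inner_sq x).tsum_eq]
  simp only [hx]
  exact tsum_comp_le_tsum_of_inj hf hf0 hj

end HilbertBasis

variable {E : Type*} [NormedAddCommGroup E] [InnerProductSpace ℝ E]

theorem norm_exp_apply_sub_le [CompleteSpace E] {A : E →L[ℝ] E} (hA : ‖A‖ ≤ 1) (x : E) :
    ‖exp A x - (x + A x)‖ ≤ ‖A‖ ^ 2 * ‖x‖ := by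
  calc ‖exp A x - (x + A x)‖ = ‖(exp A - 1 - A) x‖ := by
        rw [sub_sub, sub_apply, add_apply, one_apply_eq_self]
    _ ≤ ‖exp A - 1 - A‖ * ‖x‖ := (exp A - 1 - A).le_opNorm x
    _ ≤ ‖A‖ ^ 2 * ‖x‖ := by gcongr; exact norm_exp_sub_one_sub_le_sq hA

theorem inner_exp_neg_conj_apply [CompleteSpace E] (B T : E →L[ℝ] E) (x y : E) :
    ⟪x, (exp (-B)).comp (T.comp (exp B)) y⟫_ℝ
      = ⟪exp (-B†) x, T (exp B y)⟫_ℝ := by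
  rw [← ContinuousLinearMap.star_eq_adjoint, ← star_neg, ← star_exp,
    ContinuousLinearMap.star_eq_adjoint, ContinuousLinearMap.adjoint_inner_left]
  rfl

noncomputable def gaugeGenerator (e₀ l r : E) : E →L[ℝ] E :=
  (innerSL ℝ e₀).smulRight l - (innerSL ℝ r).smulRight e₀

section gaugeGenerator

variable {e₀ l r : E}

theorem gaugeGenerator_apply (x : E) :
    gaugeGenerator e₀ l r x = ⟪e₀, x⟫_ℝ • l - ⟪r, x⟫_ℝ • e₀ :=
  rfl

theorem gaugeGenerator_apply_self (he : ‖e₀‖ = 1) (hre : ⟪r, e₀⟫_ℝ = 0) :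
    gaugeGenerator e₀ l r e₀ = l := by
  simp [gaugeGenerator_apply, he, hre]

theorem adjoint_gaugeGenerator_apply_self [CompleteSpace E] (he : ‖e₀‖ = 1)
    (hel : ⟪e₀, l⟫_ℝ = 0) :
    ((gaugeGenerator e₀ l r)†) e₀ = -r := by
  refine ext_inner_right ℝ fun x => ?_
  rw [ContinuousLinearMap.adjoint_inner_left, gaugeGenerator_apply]
  simp [inner_sub_right, inner_smul_right, he, hel]

theorem norm_gaugeGenerator_le (he : ‖e₀‖ = 1) :
    ‖gaugeGenerator e₀ l r‖ ≤ ‖l‖ + ‖r‖ := by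
  refine (norm_sub_le _ _).trans_eq ?_
  simp [ContinuousLinearMap.norm_smulRight_apply, innerSL_apply_norm, he]

theorem norm_exp_gaugeGenerator_apply_sub_le [CompleteSpace E] (he : ‖e₀‖ = 1)
    (hre : ⟪r, e₀⟫_ℝ = 0) (hB : ‖gaugeGenerator e₀ l r‖ ≤ 1) :
    ‖exp (gaugeGenerator e₀ l r) e₀ - (e₀ + l)‖ ≤ ‖gaugeGenerator e₀ l r‖ ^ 2 := by
  simpa [gaugeGenerator_apply_self he hre, he] using norm_exp_apply_sub_le hB e₀

theorem norm_exp_neg_adjoint_gaugeGenerator_apply_sub_le [CompleteSpace E] (he : ‖e₀‖ = 1)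
    (hel : ⟪e₀, l⟫_ℝ = 0) (hB : ‖gaugeGenerator e₀ l r‖ ≤ 1) :
    ‖exp (-(gaugeGenerator e₀ l r)†) e₀ - (e₀ + r)‖
      ≤ ‖gaugeGenerator e₀ l r‖ ^ 2 := by
  have hB' : ‖-(gaugeGenerator e₀ l r)†‖ ≤ 1 := by
    rwa [norm_neg, LinearIsometryEquiv.norm_map]
  simpa [adjoint_gaugeGenerator_apply_self he hel, he] using norm_exp_apply_sub_le hB' e₀

end gaugeGenerator

theorem abs_inner_apply_sub_one_le (T : E →L[ℝ] E) {e₀ l r u v : E} {ε δ K : ℝ}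
    (he : ‖e₀‖ = 1) (hel : ⟪e₀, l⟫_ℝ = 0) (hre : ⟪r, e₀⟫_ℝ = 0)
    (hTe : T e₀ = e₀ + l) (hTe' : ∀ x, ⟪e₀, T x⟫_ℝ = ⟪e₀ + r, x⟫_ℝ)
    (hl : ‖l‖ ≤ ε) (hr : ‖r‖ ≤ ε) (hu : ‖u - (e₀ + r)‖ ≤ δ) (hv : ‖v - (e₀ + l)‖ ≤ δ)
    (hT : ‖T‖ ≤ K) :
    |⟪u, T v⟫_ℝ - 1| ≤ 2 * ε ^ 2 + 2 * (1 + ε) * δ + K * (ε + δ) ^ 2 := by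
  set ρ' := u - (e₀ + r)
  set ρ := v - (e₀ + l)
  have hCS : ∀ {x y : E} {a b : ℝ}, ‖x‖ ≤ a → ‖y‖ ≤ b → |⟪x, y⟫_ℝ| ≤ a * b := fun hx hy =>
    (abs_real_inner_le_norm _ _).trans (mul_le_mul hx hy (norm_nonneg _) ((norm_nonneg _).trans hx))
  have hel' : ‖e₀ + l‖ ≤ 1 + ε := (norm_add_le _ _).trans (by rw [he]; linarith)
  have her' : ‖e₀ + r‖ ≤ 1 + ε := (norm_add_le _ _).trans (by rw [he]; linarith)
  have hlρ : ‖l + ρ‖ ≤ ε + δ := (norm_add_le _ _).trans (add_le_add hl hv)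
  have hrρ' : ‖r + ρ'‖ ≤ ε + δ := (norm_add_le _ _).trans (add_le_add hr hu)
  have hTlρ : ‖T (l + ρ)‖ ≤ K * (ε + δ) :=
    (T.le_opNorm _).trans (mul_le_mul hT hlρ (norm_nonneg _) ((norm_nonneg T).trans hT))
  have hexpand : ⟪u, T v⟫_ℝ - 1
      = 2 * ⟪r, l⟫_ℝ + ⟪ρ', e₀ + l⟫_ℝ + ⟪e₀ + r, ρ⟫_ℝ + ⟪r + ρ', T (l + ρ)⟫_ℝ := by
    have hu' : u = e₀ + (r + ρ') := by simp only [ρ']; abel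
    have hv' : v = e₀ + (l + ρ) := by simp only [ρ]; abel
    rw [hu', hv', map_add, hTe, inner_add_right, inner_add_left e₀ (r + ρ') (T (l + ρ)), hTe']
    simp only [inner_add_left, inner_add_right, real_inner_self_eq_norm_sq, he, hel, hre]
    ring
  rw [hexpand]
  obtain ⟨hrl_lo, hrl_hi⟩ := abs_le.mp (hCS hr hl)
  obtain ⟨hρ'_lo, hρ'_hi⟩ := abs_le.mp (hCS hu hel')
  obtain ⟨hρ_lo, hρ_hi⟩ := abs_le.mp (hCS her' hv)
  obtain ⟨hquad_lo, hquad_hi⟩ := abs_le.mp (hCS hrρ' hTlρ)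
  rw [abs_le]
  constructor <;> linarith

noncomputable def stdBasis : HilbertBasis ℕ ℝ V :=
  HilbertBasis.ofRepr (LinearIsometryEquiv.refl ℝ V)

theorem stdBasis_apply (i : ℕ) : stdBasis i = e i :=
  (stdBasis.repr_symm_single i).symm

theorem inner_e (i : ℕ) (v : V) : ⟪e i, v⟫_ℝ = v i := by
  rw [← stdBasis_apply, ← stdBasis.repr_apply_apply]
  rfl

theorem norm_e (i : ℕ) : ‖e i‖ = 1 := by
  rw [← stdBasis_apply]
  exact stdBasis.orthonormal.1 i

theorem eq_e_zero_add {w t : V} {c : ℕ → ℝ} (hc : c 0 = 1) (hw : ∀ i, w i = c i)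
    (ht : ∀ i, t i = if i = 0 then 0 else c i) : w = e 0 + t := by
  ext i
  rw [lp.coeFn_add, Pi.add_apply, ← inner_e, inner_e, e, lp.single_apply, hw, ht]
  split_ifs with hi <;> simp [hi, hc]

theorem tsum_subtype_ne_eq_tsum_ite {α : Type*} [DecidableEq α] (f : α → ℝ) (a : α) :
    ∑' p : {p // p ≠ a}, f p = ∑' p, if p = a then 0 else f p :=
  (tsum_subtype {a}ᶜ f).trans <| tsum_congr fun p => by
    by_cases hp : p = a <;> simp [hp]

section offDiagonal

variable {M : ℕ × ℕ → ℝ} {ε : ℝ}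

theorem tsum_sq_eq_one_add_tsum_offDiag (hsum : Summable fun p => M p ^ 2)
    (hM00 : M (0, 0) = 1) :
    ∑' p, M p ^ 2 = 1 + ∑' p : {p : ℕ × ℕ // p ≠ (0, 0)}, M p.1 ^ 2 := by
  rw [hsum.tsum_eq_add_tsum_ite (0, 0), hM00, one_pow,
    tsum_subtype_ne_eq_tsum_ite (fun p => M p ^ 2)]

theorem norm_le_of_sq_eq_offDiag (hsum : Summable fun p => M p ^ 2)
    (hε : √(∑' p : {p : ℕ × ℕ // p ≠ (0, 0)}, M p.1 ^ 2) ≤ ε) {v : V} {j : ℕ → ℕ × ℕ}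
    (hj : Function.Injective j)
    (hv : ∀ x, v x ^ 2 = if j x = (0, 0) then 0 else M (j x) ^ 2) :
    ‖v‖ ≤ ε := by
  rw [tsum_subtype_ne_eq_tsum_ite (fun p => M p ^ 2)] at hε
  refine (stdBasis.norm_le_sqrt_tsum_of_inner_sq_eq ?_ (fun p => ?_) hj fun x => ?_).trans hε
  · refine hsum.of_nonneg_of_le (fun p => by positivity) fun p => ?_
    split_ifs
    exacts [sq_nonneg _, le_rfl]
  · split_ifs <;> positivity
  · rw [stdBasis_apply, inner_e, hv]

end offDiagonal

/-- In the gauge-transformation setup (`M` Hilbert-Schmidt with `M₀₀ = 1`, off-`(0,0)`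
Hilbert-Schmidt norm at most `ε ≤ 1/4`, `l_x = M_{x0}`, `r_x = M_{0x}`,
`B = |l⟩⟨e₀| − |e₀⟩⟨r|`), the `(0,0)` entry of `M̃ = exp(−B) M exp(B)` satisfies
`|M̃₀₀ − 1| ≤ C ε²` for an absolute constant `C`. -/
theorem stmt10 : ∃ C : ℝ, 0 < C ∧
    ∀ (M : ℕ × ℕ → ℝ) (ε : ℝ) (Mop : V →L[ℝ] V) (l r : V),
      Summable (fun p : ℕ × ℕ => (M p) ^ 2) →
      M (0, 0) = 1 →
      Real.sqrt (∑' p : {p : ℕ × ℕ // p ≠ (0, 0)}, (M p.1) ^ 2) ≤ ε →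
      ε ≤ 1 / 4 →
      (∀ i j : ℕ, (inner ℝ (e i) (Mop (e j)) : ℝ) = M (i, j)) →
      (∀ x : ℕ, l x = if x = 0 then 0 else M (x, 0)) →
      (∀ x : ℕ, r x = if x = 0 then 0 else M (0, x)) →
      ∀ B Mt : V →L[ℝ] V,
        B = (innerSL ℝ (e 0)).smulRight l - (innerSL ℝ r).smulRight (e 0) →
        Mt = (exp (-B)).comp (Mop.comp (exp B)) →
        |(inner ℝ (e 0) (Mt (e 0)) : ℝ) - 1| ≤ C * ε ^ 2 := by
  refine ⟨20, by norm_num, fun M ε Mop l r hsum hM00 hε hε4 hent hl hr B Mt hB hMt => ?_⟩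
  change B = gaugeGenerator (e 0) l r at hB
  subst hB hMt
  have hε0 : 0 ≤ ε := (Real.sqrt_nonneg _).trans hε
  have hlε : ‖l‖ ≤ ε := norm_le_of_sq_eq_offDiag hsum hε (j := fun x => (x, 0))
    (fun x y h => (Prod.mk.inj h).1) fun x => by rw [hl]; split_ifs <;> simp_all
  have hrε : ‖r‖ ≤ ε := norm_le_of_sq_eq_offDiag hsum hε (j := fun x => (0, x))
    (fun x y h => (Prod.mk.inj h).2) fun x => by rw [hr]; split_ifs <;> simp_all
  have hMop : ‖Mop‖ ≤ 2 := by
    have hentries :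
        (fun p : ℕ × ℕ => ⟪stdBasis p.1, Mop (stdBasis p.2)⟫_ℝ ^ 2) = fun p => M p ^ 2 :=
      funext fun p => by rw [stdBasis_apply, stdBasis_apply, hent]
    have hS := (Real.sqrt_le_left hε0).1 hε
    refine (stdBasis.opNorm_le_sqrt_tsum_inner_sq Mop (hentries ▸ hsum)).trans ?_
    rw [hentries, tsum_sq_eq_one_add_tsum_offDiag hsum hM00, Real.sqrt_le_left two_pos.le]
    nlinarith
  have hMe : Mop (e 0) = e 0 + l := eq_e_zero_add hM00 (fun i => by rw [← inner_e, hent]) hl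
  have hMadj : (Mop†) (e 0) = e 0 + r := eq_e_zero_add hM00
    (fun i => by rw [← inner_e, ContinuousLinearMap.adjoint_inner_right, real_inner_comm, hent])
    hr
  have hel : ⟪e 0, l⟫_ℝ = 0 := by rw [inner_e, hl]; simp
  have hre : ⟪r, e 0⟫_ℝ = 0 := by rw [real_inner_comm, inner_e, hr]; simp
  have hBε : ‖gaugeGenerator (e 0) l r‖ ≤ 2 * ε :=
    (norm_gaugeGenerator_le (norm_e 0)).trans (by linarith)
  have hB1 : ‖gaugeGenerator (e 0) l r‖ ≤ 1 := by linarith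
  rw [inner_exp_neg_conj_apply]
  refine (abs_inner_apply_sub_one_le Mop (norm_e 0) hel hre hMe
    (fun x => by rw [← ContinuousLinearMap.adjoint_inner_left, hMadj]) hlε hrε
    ((norm_exp_neg_adjoint_gaugeGenerator_apply_sub_le (norm_e 0) hel hB1).trans
      (pow_le_pow_left₀ (norm_nonneg _) hBε 2))
    ((norm_exp_gaugeGenerator_apply_sub_le (norm_e 0) hre hB1).trans
      (pow_le_pow_left₀ (norm_nonneg _) hBε 2)) hMop).trans ?_
  nlinarith [mul_nonneg (mul_nonneg hε0 hε0) (sub_nonneg.2 hε4),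
    mul_nonneg (mul_nonneg (mul_nonneg hε0 hε0) hε0) (sub_nonneg.2 hε4)]
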